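/- arXiv:1912.05498 — 2 statements merged into one kernel-verified Lean document; each statement's English description precedes it below -/
import Mathlib

section
/- If two Cantor CDFs with the same scale factor N agree at the points k/N for k = 1,...,N-1, then they are equal; i.e., {k/N : 1 ≤ k ≤ N-1} is a set of uniqueness for the family of CDFs of Cantor sets with scale factor N. -/
/-!
Write `F(x) = μ [0, x]`. Self-similarity gives, for `t ∈ [0, 1)` and `k ∈ ℕ`,
`F((t + k) / N) = (#{d ∈ D | d < k} + [k ∈ D] F(t)) / #D`.
Since `#D ≥ 2` there is no atom at `0`, so `F(k / N)` is the normalized digit count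
`#{d ∈ D | d < k} / #D`, whose increments recover `D`; hence the samples force `D = E`.
With a common digit set the difference of the two CDFs at `(t + k) / N` is at most half of
its value at `t`, and a bounded function with this property vanishes.
-/

open MeasureTheory Set
open scoped ENNReal
open scoped Finset

def IsSelfSimilar (N : ℕ) (D : Finset ℕ) (μ : Measure ℝ) : Prop :=
  μ = (#D : ℝ≥0∞)⁻¹ • ∑ d ∈ D, μ.map (fun x : ℝ => (x + (d : ℝ)) / N)

theorem eq_zero_of_forall_exists_abs_le_mul {α : Type*} {f : α → ℝ} {C c : ℝ}
    (hC : ∀ x, |f x| ≤ C) (hc₀ : 0 ≤ c) (hc₁ : c < 1) (h : ∀ x, ∃ y, |f x| ≤ c * |f y|)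
    (x : α) : f x = 0 := by
  have hpow : ∀ n : ℕ, ∀ x, |f x| ≤ c ^ n * C := by
    intro n
    induction n with
    | zero => simpa using hC
    | succ n ih =>
      intro x
      obtain ⟨y, hy⟩ := h x
      calc |f x| ≤ c * |f y| := hy
        _ ≤ c * (c ^ n * C) := by gcongr; exact ih y
        _ = c ^ (n + 1) * C := by ring
  have hlim : Filter.Tendsto (fun n : ℕ => c ^ n * C) Filter.atTop (nhds 0) := by
    simpa using (tendsto_pow_atTop_nhds_zero_of_lt_one hc₀ hc₁).mul_const C
  exact abs_nonpos_iff.mp (ge_of_tendsto' hlim fun n => hpow n x)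

theorem Finset.card_filter_lt_add_one (s : Finset ℕ) (k : ℕ) :
    #(s.filter (· < k + 1)) = #(s.filter (· < k)) + if k ∈ s then 1 else 0 := by
  rw [Finset.card_filter, Finset.card_filter, ← Finset.sum_ite_eq' s k fun _ => 1,
    ← Finset.sum_add_distrib]
  refine Finset.sum_congr rfl fun d _ => ?_
  split_ifs <;> omega

theorem Finset.eq_of_forall_card_filter_lt_div_eq {D E : Finset ℕ} (hD : D.Nonempty)
    (hE : E.Nonempty)
    (h : ∀ k, (#(D.filter (· < k)) : ℝ) / #D = #(E.filter (· < k)) / #E) : D = E := by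
  have hmem : ∀ k, (if k ∈ D then 1 else 0 : ℝ) / #D = (if k ∈ E then 1 else 0) / #E := by
    intro k
    have := h (k + 1)
    simp only [Finset.card_filter_lt_add_one, Nat.cast_add, add_div, h k, Nat.cast_ite,
      Nat.cast_one, Nat.cast_zero] at this
    linarith
  have hD₀ : (#D : ℝ) ≠ 0 := by exact_mod_cast hD.card_pos.ne'
  have hE₀ : (#E : ℝ) ≠ 0 := by exact_mod_cast hE.card_pos.ne'
  ext k
  have hk := hmem k
  by_cases hkD : k ∈ D <;> by_cases hkE : k ∈ E <;>
    simp [hkD, hkE, hD₀, hE₀.symm] at hk ⊢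

theorem exists_eq_add_natCast_div {N : ℕ} (hN : 0 < N) {x : ℝ} (hx : 0 ≤ x) :
    ∃ k : ℕ, ∃ t ∈ Ico (0 : ℝ) 1, x = (t + k) / N := by
  have hNx : 0 ≤ (N : ℝ) * x := by positivity
  refine ⟨⌊(N : ℝ) * x⌋₊, N * x - ⌊(N : ℝ) * x⌋₊, ⟨sub_nonneg.mpr (Nat.floor_le hNx),
    by linarith [Nat.lt_floor_add_one ((N : ℝ) * x)]⟩, ?_⟩
  field_simp
  ring

theorem preimage_add_div_Icc_zero {N : ℕ} (hN : 0 < N) (d : ℕ) (s : ℝ) :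
    (fun x : ℝ => (x + d) / N) ⁻¹' Icc 0 (s / N) = Icc (-(d : ℝ)) (s - d) := by
  have hN' : (0 : ℝ) < N := by exact_mod_cast hN
  ext x
  simp only [mem_preimage, mem_Icc, le_div_iff₀ hN', zero_mul,
    div_mul_cancel₀ _ hN'.ne']
  constructor <;> rintro ⟨h₁, h₂⟩ <;> constructor <;> linarith

section SelfSimilar

variable {N : ℕ} {D : Finset ℕ} {μ ν : Measure ℝ} [IsProbabilityMeasure μ]
  [IsProbabilityMeasure ν]

theorem measureReal_Icc_of_nonpos (hsupp : μ (Icc 0 1) = 1) {a : ℝ} (ha : a ≤ 0) (s : ℝ) :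
    μ.real (Icc a s) = μ.real (Icc 0 s) := by
  have hneg : μ (Iio 0) = 0 := by
    refine measure_mono_null (fun x hx => ?_)
      ((prob_compl_eq_zero_iff measurableSet_Icc).mpr hsupp)
    exact fun h => not_le.mpr (mem_Iio.mp hx) h.1
  have hsplit : Icc a s ⊆ Icc 0 s ∪ Iio 0 := fun x hx =>
    (le_or_gt 0 x).imp (fun h => ⟨h, hx.2⟩) id
  refine le_antisymm ?_ (measureReal_mono (Icc_subset_Icc_left ha))
  calc μ.real (Icc a s) ≤ μ.real (Icc 0 s ∪ Iio 0) := measureReal_mono hsplit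
    _ ≤ μ.real (Icc 0 s) + μ.real (Iio 0) := measureReal_union_le _ _
    _ = μ.real (Icc 0 s) := by simp [measureReal_def, hneg]

theorem measureReal_Icc_zero_of_one_le (hsupp : μ (Icc 0 1) = 1) {s : ℝ} (hs : 1 ≤ s) :
    μ.real (Icc 0 s) = 1 := by
  refine le_antisymm measureReal_le_one ?_
  calc (1 : ℝ) = μ.real (Icc 0 1) := by simp [measureReal_def, hsupp]
    _ ≤ μ.real (Icc 0 s) := measureReal_mono (Icc_subset_Icc_right hs)

theorem IsSelfSimilar.measureReal_eq (hμ : IsSelfSimilar N D μ) {A : Set ℝ}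
    (hA : MeasurableSet A) :
    μ.real A = (∑ d ∈ D, μ.real ((fun x : ℝ => (x + d) / N) ⁻¹' A)) / #D := by
  conv_lhs => rw [hμ]
  rw [measureReal_def, Measure.smul_apply, Measure.finsetSum_apply, smul_eq_mul,
    ENNReal.toReal_mul, ENNReal.toReal_inv, ENNReal.toReal_natCast, inv_mul_eq_div,
    ENNReal.toReal_sum fun d _ => measure_ne_top _ _]
  congr 1
  refine Finset.sum_congr rfl fun d _ => ?_
  rw [Measure.map_apply (by fun_prop) hA, measureReal_def]

theorem measureReal_Icc_neg_natCast (hsupp : μ (Icc 0 1) = 1) {t : ℝ} (ht : t ∈ Ico (0 : ℝ) 1)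
    (d k : ℕ) :
    μ.real (Icc (-(d : ℝ)) (t + k - d)) =
      (if d < k then 1 else 0) + if d = k then μ.real (Icc 0 t) else 0 := by
  rw [measureReal_Icc_of_nonpos hsupp (by simp)]
  rcases lt_trichotomy d k with hdk | rfl | hkd
  · have : (d : ℝ) + 1 ≤ k := by exact_mod_cast hdk
    simp [hdk, hdk.ne, measureReal_Icc_zero_of_one_le hsupp (by linarith [ht.1] : 1 ≤ t + k - d)]
  · simp
  · have : (k : ℝ) + 1 ≤ d := by exact_mod_cast hkd
    simp [hkd.not_gt, hkd.ne', Icc_eq_empty_of_lt (by linarith [ht.2] : t + k - d < 0)]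

theorem IsSelfSimilar.measureReal_Icc_add_natCast_div (hN : 0 < N) (hsupp : μ (Icc 0 1) = 1)
    (hμ : IsSelfSimilar N D μ) {t : ℝ} (ht : t ∈ Ico (0 : ℝ) 1) (k : ℕ) :
    μ.real (Icc 0 ((t + k) / N)) =
      (#(D.filter (· < k)) + if k ∈ D then μ.real (Icc 0 t) else 0) / #D := by
  rw [hμ.measureReal_eq measurableSet_Icc]
  simp only [preimage_add_div_Icc_zero hN, measureReal_Icc_neg_natCast hsupp ht,
    Finset.sum_add_distrib, Finset.sum_boole, Finset.sum_ite_eq']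

theorem IsSelfSimilar.measureReal_singleton_zero (hN : 0 < N) (hD : 2 ≤ #D)
    (hsupp : μ (Icc 0 1) = 1) (hμ : IsSelfSimilar N D μ) : μ.real {0} = 0 := by
  have h := hμ.measureReal_Icc_add_natCast_div hN hsupp (t := 0) ⟨le_rfl, one_pos⟩ 0
  simp only [CharP.cast_eq_zero, add_zero, zero_div, Icc_self, not_lt_zero, Finset.filter_false,
    Finset.card_empty, zero_add] at h
  have hD' : (2 : ℝ) ≤ #D := by exact_mod_cast hD
  have hite : (if 0 ∈ D then μ.real {0} else 0) ≤ μ.real {0} := by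
    split_ifs
    exacts [le_rfl, measureReal_nonneg]
  have hle : μ.real {0} ≤ μ.real {0} / 2 :=
    calc μ.real {0} = (if 0 ∈ D then μ.real {0} else 0) / #D := h
      _ ≤ μ.real {0} / #D := div_le_div_of_nonneg_right hite (Nat.cast_nonneg _)
      _ ≤ μ.real {0} / 2 := div_le_div_of_nonneg_left measureReal_nonneg two_pos hD'
  exact le_antisymm (by linarith) measureReal_nonneg

theorem IsSelfSimilar.measureReal_Icc_natCast_div (hN : 0 < N) (hD : 2 ≤ #D)
    (hsupp : μ (Icc 0 1) = 1) (hμ : IsSelfSimilar N D μ) (k : ℕ) :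
    μ.real (Icc 0 (k / N)) = #(D.filter (· < k)) / #D := by
  simpa [Icc_self, hμ.measureReal_singleton_zero hN hD hsupp] using
    hμ.measureReal_Icc_add_natCast_div hN hsupp ⟨le_rfl, one_pos⟩ k

theorem IsSelfSimilar.exists_abs_sub_measureReal_Icc_le_half (hN : 0 < N) (hD : 2 ≤ #D)
    (hμsupp : μ (Icc 0 1) = 1) (hμ : IsSelfSimilar N D μ)
    (hνsupp : ν (Icc 0 1) = 1) (hν : IsSelfSimilar N D ν) (x : ℝ) :
    ∃ y, |μ.real (Icc 0 x) - ν.real (Icc 0 x)| ≤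
      1 / 2 * |μ.real (Icc 0 y) - ν.real (Icc 0 y)| := by
  rcases lt_or_ge x 0 with hx | hx
  · exact ⟨x, by simp [Icc_eq_empty_of_lt hx]⟩
  obtain ⟨k, t, ht, rfl⟩ := exists_eq_add_natCast_div hN hx
  refine ⟨t, ?_⟩
  have hdiff : μ.real (Icc 0 ((t + k) / N)) - ν.real (Icc 0 ((t + k) / N)) =
      (if k ∈ D then μ.real (Icc 0 t) - ν.real (Icc 0 t) else 0) / #D := by
    rw [hμ.measureReal_Icc_add_natCast_div hN hμsupp ht,
      hν.measureReal_Icc_add_natCast_div hN hνsupp ht]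
    split_ifs <;> ring
  have hD' : (2 : ℝ) ≤ #D := by exact_mod_cast hD
  rw [hdiff, abs_div, Nat.abs_cast]
  split_ifs
  · rw [one_div_mul_eq_div]
    exact div_le_div_of_nonneg_left (abs_nonneg _) two_pos hD'
  · simp

end SelfSimilar

theorem cantor_cdf_uniqueness_from_samples_general
    (N : ℕ) (hN : 3 ≤ N)
    (D E : Finset ℕ)
    (hDcard : 2 ≤ D.card)
    (hEcard : 2 ≤ E.card)
    (μ ν : Measure ℝ) [IsProbabilityMeasure μ] [IsProbabilityMeasure ν]
    (hμsupp : μ (Set.Icc 0 1) = 1)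
    (hμinv : μ = (D.card : ℝ≥0∞)⁻¹ • ∑ d ∈ D, μ.map (fun x : ℝ => (x + (d : ℝ)) / N))
    (hνsupp : ν (Set.Icc 0 1) = 1)
    (hνinv : ν = (E.card : ℝ≥0∞)⁻¹ • ∑ d ∈ E, ν.map (fun x : ℝ => (x + (d : ℝ)) / N))
    (hsamples : ∀ k : ℕ, 1 ≤ k → k ≤ N - 1 →
      (μ (Set.Icc 0 ((k : ℝ) / N))).toReal = (ν (Set.Icc 0 ((k : ℝ) / N))).toReal) :
    ∀ x : ℝ, (μ (Set.Icc 0 x)).toReal = (ν (Set.Icc 0 x)).toReal := by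
  have hN₀ : 0 < N := by omega
  have hμ : IsSelfSimilar N D μ := hμinv
  have hν : IsSelfSimilar N E ν := hνinv
  have hnat : ∀ k : ℕ, μ.real (Icc 0 (k / N)) = ν.real (Icc 0 (k / N)) := by
    intro k
    rcases Nat.eq_zero_or_pos k with rfl | hk₀
    · simp [hμ.measureReal_singleton_zero hN₀ hDcard hμsupp,
        hν.measureReal_singleton_zero hN₀ hEcard hνsupp]
    rcases lt_or_ge k N with hkN | hkN
    · exact hsamples k hk₀ (by omega)
    · have hk : 1 ≤ (k : ℝ) / N := (one_le_div (by positivity)).mpr (by exact_mod_cast hkN)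
      rw [measureReal_Icc_zero_of_one_le hμsupp hk, measureReal_Icc_zero_of_one_le hνsupp hk]
  have hDE : D = E := Finset.eq_of_forall_card_filter_lt_div_eq
    (Finset.card_pos.mp (by omega)) (Finset.card_pos.mp (by omega)) fun k => by
      rw [← hμ.measureReal_Icc_natCast_div hN₀ hDcard hμsupp,
        ← hν.measureReal_Icc_natCast_div hN₀ hEcard hνsupp, hnat]
  subst hDE
  intro x
  have hbound : ∀ y, |μ.real (Icc 0 y) - ν.real (Icc 0 y)| ≤ 1 := fun y =>
    abs_sub_le_of_nonneg_of_le measureReal_nonneg measureReal_le_one measureReal_nonneg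
      measureReal_le_one
  exact sub_eq_zero.mp (eq_zero_of_forall_exists_abs_le_mul hbound one_half_pos.le
    one_half_lt_one (hμ.exists_abs_sub_measureReal_Icc_le_half hN₀ hDcard hμsupp hνsupp hν) x)

theorem cantor_cdf_uniqueness_from_samples
    (N : ℕ) (hN : 3 ≤ N)
    (D E : Finset ℕ) (hD : D ⊆ Finset.range N) (hE : E ⊆ Finset.range N)
    (hDcard : 2 ≤ D.card) (hDcard' : D.card ≤ N - 1)
    (hEcard : 2 ≤ E.card) (hEcard' : E.card ≤ N - 1)
    (μ ν : Measure ℝ) [IsProbabilityMeasure μ] [IsProbabilityMeasure ν]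
    (hμsupp : μ (Set.Icc 0 1) = 1)
    (hμinv : μ = (D.card : ℝ≥0∞)⁻¹ • ∑ d ∈ D, μ.map (fun x : ℝ => (x + (d : ℝ)) / N))
    (hνsupp : ν (Set.Icc 0 1) = 1)
    (hνinv : ν = (E.card : ℝ≥0∞)⁻¹ • ∑ d ∈ E, ν.map (fun x : ℝ => (x + (d : ℝ)) / N))
    (hsamples : ∀ k : ℕ, 1 ≤ k → k ≤ N - 1 →
      (μ (Set.Icc 0 ((k : ℝ) / N))).toReal = (ν (Set.Icc 0 ((k : ℝ) / N))).toReal) :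
    ∀ x : ℝ, (μ (Set.Icc 0 x)).toReal = (ν (Set.Icc 0 x)).toReal :=
  cantor_cdf_uniqueness_from_samples_general N hN D E hDcard hEcard μ ν hμsupp hμinv hνsupp hνinv
    hsamples
end

section
/- If B₁ and B₂ are binary digit vectors (of lengths N^L and N^M respectively, both powers of a common base N) whose Kronecker products commute, B₁⊗B₂ = B₂⊗B₁, then their Cantor CDFs coincide: F_{B₁} = F_{B₂}. -/
open MeasureTheory Set
open scoped ENNReal

/-- The Kronecker product of digit sets: `D₁ ⊗ D₂ = {c + b·N₂ : c ∈ D₂, b ∈ D₁}`,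
where `N₂` is the scale factor of `D₂`. -/
def kronDigitSet (N₂ : ℕ) (D₁ D₂ : Finset ℕ) : Finset ℕ :=
  Finset.image (fun p : ℕ × ℕ => p.2 + p.1 * N₂) (D₁ ×ˢ D₂)

/-!
The Hutchinson operator `T_D μ = |D|⁻¹ ∑_{d ∈ D} (x ↦ (x + d) / R)_* μ` contracts the sup-distance
between CDFs of probability measures on `[0, 1]` by the factor `1 / |D| ≤ 1 / 2`, so it has at most
one invariant CDF. Composing Hutchinson operators multiplies the scales and takes the
Kronecker product of the digit sets, so `B₁ ⊗ B₂ = B₂ ⊗ B₁` makes `T_{B₁}` and `T_{B₂}` commute.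
Hence `T_{B₂} μ` is `T_{B₁}`-invariant and has the CDF of `μ`; that CDF is then `T_{B₂}`-invariant,
so it is the CDF of `ν`.
-/

open Filter Topology

lemma eq_zero_of_forall_abs_le_half {α : Type*} {f : α → ℝ} {C : ℝ} (hC : ∀ y, |f y| ≤ C)
    (h : ∀ δ, (∀ y, |f y| ≤ δ) → ∀ y, |f y| ≤ δ / 2) : f = 0 := by
  have hpow : ∀ k : ℕ, ∀ y, |f y| ≤ C * 2⁻¹ ^ k := by
    intro k
    induction k with
    | zero => simpa using hC
    | succ k ih => exact fun y => (h _ ih y).trans_eq (by ring)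
  have hlim : Tendsto (fun k : ℕ => C * 2⁻¹ ^ k) atTop (𝓝 0) := by
    have h₂ := tendsto_pow_atTop_nhds_zero_of_lt_one (r := (2⁻¹ : ℝ)) (by norm_num) (by norm_num)
    simpa using h₂.const_mul C
  funext y
  exact abs_nonpos_iff.mp (ge_of_tendsto' hlim (hpow · y))

/-- The points `a - d`, `d ∈ ℕ`, are spaced `1` apart, so at most one of them lies in `[0, 1)`. -/
lemma abs_sum_sub_natCast_le {g : ℝ → ℝ} {δ : ℝ} (hg : ∀ t ∉ Ico 0 1, g t = 0)
    (hδ : ∀ t, |g t| ≤ δ) (D : Finset ℕ) (a : ℝ) : |∑ d ∈ D, g (a - d)| ≤ δ := by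
  have hsupp : ∀ d ∈ D, g (a - d) ≠ 0 → (d : ℤ) = ⌊a⌋ := by
    intro d _ hd
    have ⟨h₀, h₁⟩ : 0 ≤ a - d ∧ a - d < 1 := not_not.mp (mt (hg _) hd)
    exact (Int.floor_eq_iff.mpr ⟨by push_cast; linarith, by push_cast; linarith⟩).symm
  set S := D.filter fun d : ℕ => (d : ℤ) = ⌊a⌋
  have hcard : S.card ≤ 1 :=
    Finset.card_le_one.mpr fun b hb c hc => by
      simp only [S, Finset.mem_filter] at hb hc
      omega
  rw [← Finset.sum_filter_of_ne hsupp]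
  calc |∑ d ∈ S, g (a - d)| ≤ ∑ d ∈ S, |g (a - d)| := Finset.abs_sum_le_sum_abs _ _
    _ ≤ S.card • δ := Finset.sum_le_card_nsmul _ _ _ fun _ _ => hδ _
    _ ≤ δ := by
      rw [nsmul_eq_mul]
      exact mul_le_of_le_one_left ((abs_nonneg _).trans (hδ 0)) (by exact_mod_cast hcard)

noncomputable def digitMap (R d : ℕ) (x : ℝ) : ℝ := (x + d) / R

lemma measurable_digitMap (R d : ℕ) : Measurable (digitMap R d) :=
  (measurable_id.add_const _).div_const _

lemma digitMap_comp_digitMap {R₂ : ℕ} (hR₂ : 0 < R₂) (R₁ d₁ d₂ : ℕ) :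
    digitMap R₁ d₁ ∘ digitMap R₂ d₂ = digitMap (R₁ * R₂) (d₂ + d₁ * R₂) := by
  have hR₂' : (R₂ : ℝ) ≠ 0 := by positivity
  ext x
  simp only [Function.comp_apply, digitMap, Nat.cast_mul, Nat.cast_add, div_add' _ _ _ hR₂',
    div_div]
  ring_nf

lemma digitMap_preimage_Icc {R : ℕ} (hR : 0 < R) (d : ℕ) (x : ℝ) :
    digitMap R d ⁻¹' Icc 0 x = Icc (-(d : ℝ)) (R * x - d) := by
  have hR' : (0 : ℝ) < R := by exact_mod_cast hR
  ext y
  simp only [mem_preimage, mem_Icc, digitMap, div_le_iff₀ hR', le_div_iff₀ hR']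
  constructor <;> rintro ⟨h₀, h₁⟩ <;> constructor <;> linarith

noncomputable def hutchinson (R : ℕ) (D : Finset ℕ) (μ : Measure ℝ) : Measure ℝ :=
  (D.card : ℝ≥0∞)⁻¹ • ∑ d ∈ D, μ.map (digitMap R d)

lemma hutchinson_apply (R : ℕ) (D : Finset ℕ) (μ : Measure ℝ) {s : Set ℝ} (hs : MeasurableSet s) :
    hutchinson R D μ s = (D.card : ℝ≥0∞)⁻¹ * ∑ d ∈ D, μ (digitMap R d ⁻¹' s) := by
  simp only [hutchinson, Measure.smul_apply, smul_eq_mul, Measure.finsetSum_apply,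
    Measure.map_apply (measurable_digitMap R _) hs]

lemma isProbabilityMeasure_hutchinson (R : ℕ) {D : Finset ℕ} (hD : D.Nonempty) (μ : Measure ℝ)
    [IsProbabilityMeasure μ] : IsProbabilityMeasure (hutchinson R D μ) := by
  constructor
  simp [hutchinson_apply R D μ MeasurableSet.univ, ENNReal.inv_mul_cancel, hD.card_pos.ne']

lemma hutchinson_Icc_zero_one {R : ℕ} {D : Finset ℕ} (hD : D ⊆ Finset.range R)
    (hDne : D.Nonempty) {μ : Measure ℝ} [IsProbabilityMeasure μ] (hμ : μ (Icc 0 1) = 1) :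
    hutchinson R D μ (Icc 0 1) = 1 := by
  have hterm : ∀ d ∈ D, μ (digitMap R d ⁻¹' Icc 0 1) = 1 := by
    intro d hd
    have hdR : d < R := Finset.mem_range.mp (hD hd)
    have hdR' : (d : ℝ) + 1 ≤ R := by exact_mod_cast hdR
    refine le_antisymm prob_le_one (hμ ▸ measure_mono ?_)
    rw [digitMap_preimage_Icc (by omega)]
    exact Icc_subset_Icc (by simp) (by linarith)
  simp [hutchinson_apply R D μ measurableSet_Icc, Finset.sum_congr rfl hterm,
    ENNReal.inv_mul_cancel, hDne.card_pos.ne']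

lemma kronDigitSet_injOn {R₂ : ℕ} (D₁ : Finset ℕ) {D₂ : Finset ℕ} (hD₂ : D₂ ⊆ Finset.range R₂) :
    Set.InjOn (fun p : ℕ × ℕ => p.2 + p.1 * R₂) (D₁ ×ˢ D₂ : Finset (ℕ × ℕ)) := by
  rintro ⟨a₁, a₂⟩ ha ⟨b₁, b₂⟩ hb hab
  simp only [Finset.coe_product, Set.mem_prod, Finset.mem_coe] at ha hb hab
  have ha₂ := Finset.mem_range.mp (hD₂ ha.2)
  have hb₂ := Finset.mem_range.mp (hD₂ hb.2)
  have hR₂ : 0 < R₂ := by omega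
  have h₁ : a₁ = b₁ := by
    simpa [Nat.add_mul_div_right _ _ hR₂, Nat.div_eq_of_lt, ha₂, hb₂] using congrArg (· / R₂) hab
  have h₂ : a₂ = b₂ := by
    simpa [Nat.mod_eq_of_lt, ha₂, hb₂] using congrArg (· % R₂) hab
  rw [h₁, h₂]

lemma card_kronDigitSet {R₂ : ℕ} (D₁ : Finset ℕ) {D₂ : Finset ℕ} (hD₂ : D₂ ⊆ Finset.range R₂) :
    (kronDigitSet R₂ D₁ D₂).card = D₁.card * D₂.card := by
  rw [kronDigitSet, Finset.card_image_of_injOn (kronDigitSet_injOn D₁ hD₂), Finset.card_product]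

lemma sum_kronDigitSet {β : Type*} [AddCommMonoid β] {R₂ : ℕ} (D₁ : Finset ℕ) {D₂ : Finset ℕ}
    (hD₂ : D₂ ⊆ Finset.range R₂) (f : ℕ → β) :
    ∑ k ∈ kronDigitSet R₂ D₁ D₂, f k = ∑ d₁ ∈ D₁, ∑ d₂ ∈ D₂, f (d₂ + d₁ * R₂) := by
  rw [kronDigitSet, Finset.sum_image (kronDigitSet_injOn D₁ hD₂), Finset.sum_product]

lemma hutchinson_hutchinson {R₂ : ℕ} (hR₂ : 0 < R₂) (R₁ : ℕ) (D₁ : Finset ℕ) {D₂ : Finset ℕ}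
    (hD₂ : D₂ ⊆ Finset.range R₂) (μ : Measure ℝ) :
    hutchinson R₁ D₁ (hutchinson R₂ D₂ μ) = hutchinson (R₁ * R₂) (kronDigitSet R₂ D₁ D₂) μ := by
  simp only [hutchinson, Measure.map_smul,
    Measure.map_finset_sum (measurable_digitMap _ _).aemeasurable,
    Measure.map_map (measurable_digitMap _ _) (measurable_digitMap _ _),
    digitMap_comp_digitMap hR₂, sum_kronDigitSet D₁ hD₂, card_kronDigitSet D₁ hD₂,
    ← Finset.smul_sum, smul_smul, Nat.cast_mul]
  rw [ENNReal.mul_inv (by simp) (by simp)]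

noncomputable def cdfIcc (μ : Measure ℝ) (x : ℝ) : ℝ := (μ (Icc 0 x)).toReal

lemma cdfIcc_mem_Icc (μ : Measure ℝ) [IsProbabilityMeasure μ] (x : ℝ) : cdfIcc μ x ∈ Icc 0 1 :=
  ⟨ENNReal.toReal_nonneg, ENNReal.toReal_le_of_le_ofReal zero_le_one (by simpa using prob_le_one)⟩

lemma abs_cdfIcc_sub_le_one (μ ν : Measure ℝ) [IsProbabilityMeasure μ] [IsProbabilityMeasure ν]
    (x : ℝ) : |cdfIcc μ x - cdfIcc ν x| ≤ 1 := by
  obtain ⟨hμ₀, hμ₁⟩ := cdfIcc_mem_Icc μ x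
  obtain ⟨hν₀, hν₁⟩ := cdfIcc_mem_Icc ν x
  exact abs_sub_le_iff.mpr ⟨by linarith, by linarith⟩

lemma cdfIcc_of_neg (μ : Measure ℝ) {x : ℝ} (hx : x < 0) : cdfIcc μ x = 0 := by
  simp [cdfIcc, Icc_eq_empty_of_lt hx]

lemma cdfIcc_of_one_le {μ : Measure ℝ} [IsProbabilityMeasure μ] (hμ : μ (Icc 0 1) = 1) {x : ℝ}
    (hx : 1 ≤ x) : cdfIcc μ x = 1 := by
  have : μ (Icc 0 x) = 1 :=
    le_antisymm prob_le_one (hμ ▸ measure_mono (Icc_subset_Icc_right hx))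
  simp [cdfIcc, this]

lemma cdfIcc_sub_eq_zero_of_notMem_Ico {μ ν : Measure ℝ} [IsProbabilityMeasure μ]
    [IsProbabilityMeasure ν] (hμ : μ (Icc 0 1) = 1) (hν : ν (Icc 0 1) = 1) {t : ℝ}
    (ht : t ∉ Ico 0 1) : cdfIcc μ t - cdfIcc ν t = 0 := by
  rcases lt_or_ge t 0 with ht₀ | ht₀
  · simp [cdfIcc_of_neg _ ht₀]
  · have ht₁ : 1 ≤ t := by simpa [ht₀] using ht
    simp [cdfIcc_of_one_le hμ ht₁, cdfIcc_of_one_le hν ht₁]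

lemma measure_Icc_neg_natCast {μ : Measure ℝ} [IsProbabilityMeasure μ] (hμ : μ (Icc 0 1) = 1)
    (d : ℕ) (t : ℝ) : μ (Icc (-(d : ℝ)) t) = μ (Icc 0 t) := by
  have hnull : μ (Icc 0 1)ᶜ = 0 := by rw [prob_compl_eq_zero_iff measurableSet_Icc, hμ]
  rw [← measure_inter_conull hnull, ← measure_inter_conull (s := Icc 0 t) hnull]
  congr 1
  ext y
  simp only [mem_inter_iff, mem_Icc]
  constructor <;> rintro ⟨⟨_, _⟩, _, _⟩ <;> refine ⟨⟨?_, ?_⟩, ?_, ?_⟩ <;>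
    first | assumption | linarith [(Nat.cast_nonneg d : (0 : ℝ) ≤ d)]

lemma cdfIcc_hutchinson {R : ℕ} (hR : 0 < R) (D : Finset ℕ) {μ : Measure ℝ}
    [IsProbabilityMeasure μ] (hμ : μ (Icc 0 1) = 1) (x : ℝ) :
    cdfIcc (hutchinson R D μ) x = (D.card : ℝ)⁻¹ * ∑ d ∈ D, cdfIcc μ (R * x - d) := by
  simp only [cdfIcc, hutchinson_apply R D μ measurableSet_Icc, digitMap_preimage_Icc hR,
    measure_Icc_neg_natCast hμ, ENNReal.toReal_mul, ENNReal.toReal_inv, ENNReal.toReal_natCast,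
    ENNReal.toReal_sum fun _ _ => measure_ne_top μ _]

lemma abs_cdfIcc_hutchinson_sub_le {R : ℕ} {D : Finset ℕ} (hD : D ⊆ Finset.range R)
    (hcard : 2 ≤ D.card) {μ ν : Measure ℝ} [IsProbabilityMeasure μ] [IsProbabilityMeasure ν]
    (hμ : μ (Icc 0 1) = 1) (hν : ν (Icc 0 1) = 1) {δ : ℝ}
    (hδ : ∀ y, |cdfIcc μ y - cdfIcc ν y| ≤ δ) (x : ℝ) :
    |cdfIcc (hutchinson R D μ) x - cdfIcc (hutchinson R D ν) x| ≤ δ / 2 := by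
  obtain ⟨d, hd⟩ : D.Nonempty := Finset.card_pos.mp (by omega)
  have hR : 0 < R := Nat.zero_lt_of_lt (Finset.mem_range.mp (hD hd))
  have hsum : |∑ d ∈ D, (cdfIcc μ (R * x - d) - cdfIcc ν (R * x - d))| ≤ δ :=
    abs_sum_sub_natCast_le (fun _ => cdfIcc_sub_eq_zero_of_notMem_Ico hμ hν) hδ D _
  have hcard' : (2 : ℝ) ≤ D.card := by exact_mod_cast hcard
  have hδ₀ : 0 ≤ δ := (abs_nonneg _).trans (hδ 0)
  rw [cdfIcc_hutchinson hR D hμ, cdfIcc_hutchinson hR D hν, ← mul_sub, ← Finset.sum_sub_distrib,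
    abs_mul, abs_inv, Nat.abs_cast]
  calc (D.card : ℝ)⁻¹ * |∑ d ∈ D, (cdfIcc μ (R * x - d) - cdfIcc ν (R * x - d))|
      ≤ (D.card : ℝ)⁻¹ * δ := by gcongr
    _ ≤ 2⁻¹ * δ := by gcongr
    _ = δ / 2 := inv_mul_eq_div _ _

theorem cdfIcc_eq_of_hutchinson_invariant {R : ℕ} {D : Finset ℕ} (hD : D ⊆ Finset.range R)
    (hcard : 2 ≤ D.card) {μ ν : Measure ℝ} [IsProbabilityMeasure μ] [IsProbabilityMeasure ν]
    (hμ : μ (Icc 0 1) = 1) (hν : ν (Icc 0 1) = 1)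
    (hμT : cdfIcc (hutchinson R D μ) = cdfIcc μ) (hνT : cdfIcc (hutchinson R D ν) = cdfIcc ν) :
    cdfIcc μ = cdfIcc ν := by
  refine sub_eq_zero.mp (eq_zero_of_forall_abs_le_half (abs_cdfIcc_sub_le_one μ ν) ?_)
  intro δ hδ x
  simpa only [Pi.sub_apply, hμT, hνT] using abs_cdfIcc_hutchinson_sub_le hD hcard hμ hν hδ x

theorem commuting_kron_implies_equal_cdfs_general
    (N L M : ℕ) (hN : 2 ≤ N)
    (D₁ D₂ : Finset ℕ)
    (hD₁ : D₁ ⊆ Finset.range (N ^ L)) (hD₂ : D₂ ⊆ Finset.range (N ^ M))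
    (hD₁card : 2 ≤ D₁.card)
    (hD₂card : 2 ≤ D₂.card)
    (hcomm : kronDigitSet (N ^ M) D₁ D₂ = kronDigitSet (N ^ L) D₂ D₁)
    (μ ν : Measure ℝ) [IsProbabilityMeasure μ] [IsProbabilityMeasure ν]
    (hμsupp : μ (Set.Icc 0 1) = 1)
    (hμinv : μ = (D₁.card : ℝ≥0∞)⁻¹ •
        ∑ d ∈ D₁, μ.map (fun x : ℝ => (x + (d : ℝ)) / (N ^ L : ℕ)))
    (hνsupp : ν (Set.Icc 0 1) = 1)
    (hνinv : ν = (D₂.card : ℝ≥0∞)⁻¹ •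
        ∑ d ∈ D₂, ν.map (fun x : ℝ => (x + (d : ℝ)) / (N ^ M : ℕ))) :
    ∀ x : ℝ, (μ (Set.Icc 0 x)).toReal = (ν (Set.Icc 0 x)).toReal := by
  have hR₁ : 0 < N ^ L := pow_pos (by omega) L
  have hR₂ : 0 < N ^ M := pow_pos (by omega) M
  have hμT : hutchinson (N ^ L) D₁ μ = μ := hμinv.symm
  have hνT : hutchinson (N ^ M) D₂ ν = ν := hνinv.symm
  have hT₂μ_invariant :
      hutchinson (N ^ L) D₁ (hutchinson (N ^ M) D₂ μ) = hutchinson (N ^ M) D₂ μ := by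
    rw [hutchinson_hutchinson hR₂ _ _ hD₂, hcomm, mul_comm,
      ← hutchinson_hutchinson hR₁ _ _ hD₁, hμT]
  have hD₂ne : D₂.Nonempty := Finset.card_pos.mp (by omega)
  have := isProbabilityMeasure_hutchinson (N ^ M) hD₂ne μ
  have hT₂μ : cdfIcc (hutchinson (N ^ M) D₂ μ) = cdfIcc μ :=
    cdfIcc_eq_of_hutchinson_invariant hD₁ hD₁card (hutchinson_Icc_zero_one hD₂ hD₂ne hμsupp)
      hμsupp (congrArg cdfIcc hT₂μ_invariant) (congrArg cdfIcc hμT)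
  exact congrFun (cdfIcc_eq_of_hutchinson_invariant hD₂ hD₂card hμsupp hνsupp hT₂μ
    (congrArg cdfIcc hνT))

theorem commuting_kron_implies_equal_cdfs
    (N L M : ℕ) (hN : 2 ≤ N) (hL : 1 ≤ L) (hM : 1 ≤ M)
    (D₁ D₂ : Finset ℕ)
    (hD₁ : D₁ ⊆ Finset.range (N ^ L)) (hD₂ : D₂ ⊆ Finset.range (N ^ M))
    (hD₁card : 2 ≤ D₁.card) (hD₁card' : D₁.card ≤ N ^ L - 1)
    (hD₂card : 2 ≤ D₂.card) (hD₂card' : D₂.card ≤ N ^ M - 1)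
    (hcomm : kronDigitSet (N ^ M) D₁ D₂ = kronDigitSet (N ^ L) D₂ D₁)
    (μ ν : Measure ℝ) [IsProbabilityMeasure μ] [IsProbabilityMeasure ν]
    (hμsupp : μ (Set.Icc 0 1) = 1)
    (hμinv : μ = (D₁.card : ℝ≥0∞)⁻¹ •
        ∑ d ∈ D₁, μ.map (fun x : ℝ => (x + (d : ℝ)) / (N ^ L : ℕ)))
    (hνsupp : ν (Set.Icc 0 1) = 1)
    (hνinv : ν = (D₂.card : ℝ≥0∞)⁻¹ •
        ∑ d ∈ D₂, ν.map (fun x : ℝ => (x + (d : ℝ)) / (N ^ M : ℕ))) :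
    ∀ x : ℝ, (μ (Set.Icc 0 x)).toReal = (ν (Set.Icc 0 x)).toReal :=
  commuting_kron_implies_equal_cdfs_general N L M hN D₁ D₂ hD₁ hD₂ hD₁card hD₂card hcomm μ ν hμsupp
    hμinv hνsupp hνinv
end
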